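/- Let W^P = {w ∈ W(D_{n+1}) : w⁻¹(α_i) > 0 for 1 ≤ i ≤ n} be the Kostant representatives for the parabolic deleting α₀. Then the elements of W^P of length exactly n are precisely the two elements w⁺: e_i ↦ e_{i+1} (0 ≤ i ≤ n-1), e_n ↦ e₀, and w⁻: e_i ↦ e_{i+1} (0 ≤ i ≤ n-2), e_{n-1} ↦ -e_n, e_n ↦ -e₀. -/

import Mathlib

open Finset

/-- The positive roots `{e_i - e_j, e_i + e_j : 0 ≤ i < j ≤ n}` of type `D_{n+1}`. -/
def posRoots (n : ℕ) : Finset (Fin (n+1) → ℚ) :=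
  ((Finset.univ.filter (fun p : Fin (n+1) × Fin (n+1) => p.1 < p.2)).image
      (fun p => (Pi.single p.1 (1:ℚ) - Pi.single p.2 (1:ℚ) : Fin (n+1) → ℚ))) ∪
  ((Finset.univ.filter (fun p : Fin (n+1) × Fin (n+1) => p.1 < p.2)).image
      (fun p => (Pi.single p.1 (1:ℚ) + Pi.single p.2 (1:ℚ) : Fin (n+1) → ℚ)))

/-- The simple roots of type `D_{n+1}`. -/
def sroot (n k : ℕ) : Fin (n+1) → ℚ :=
  if k < n then
    (fun i => if (i : ℕ) = k then 1 else if (i : ℕ) = k + 1 then -1 else 0)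
  else
    (fun i => if (i : ℕ) = n - 1 ∨ (i : ℕ) = n then 1 else 0)

/-- The length (inversion count) of an element acting on `ℚ^{n+1}`. -/
def lenOf (n : ℕ) (f : (Fin (n+1) → ℚ) → (Fin (n+1) → ℚ)) : ℕ :=
  ((posRoots n).filter (fun α => -(f α) ∈ posRoots n)).card

/-- The Weyl group of type `D_{n+1}` as even signed permutations of coordinates. -/
def Wgrp (n : ℕ) : Set ((Fin (n+1) → ℚ) → (Fin (n+1) → ℚ)) :=
  {f | ∃ (σ : Equiv.Perm (Fin (n+1))) (ε : Fin (n+1) → ℚ),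
    (∀ i, ε i = 1 ∨ ε i = -1) ∧ (∏ i, ε i = 1) ∧
    ∀ v i, f v i = ε i * v (σ⁻¹ i)}

/-- Kostant representatives for the parabolic obtained by deleting `α₀`. -/
def WPset (n : ℕ) : Set ((Fin (n+1) → ℚ) → (Fin (n+1) → ℚ)) :=
  {f | f ∈ Wgrp n ∧ ∀ k : ℕ, 1 ≤ k → k ≤ n → ∃ β ∈ posRoots n, f β = sroot n k}

/-- `w⁺`: `e_i ↦ e_{i+1}` for `0 ≤ i ≤ n-1`, `e_n ↦ e₀`, acting on `ℚ^{n+1}`. -/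
def wplusFun (n : ℕ) : (Fin (n+1) → ℚ) → (Fin (n+1) → ℚ) :=
  fun v j => if (j : ℕ) = 0 then v (Fin.last n)
    else v ⟨(j : ℕ) - 1, Nat.lt_of_le_of_lt (Nat.sub_le _ _) j.isLt⟩

/-- `w⁻`: `e_i ↦ e_{i+1}` for `0 ≤ i ≤ n-2`, `e_{n-1} ↦ -e_n`, `e_n ↦ -e₀`. -/
def wminusFun (n : ℕ) : (Fin (n+1) → ℚ) → (Fin (n+1) → ℚ) :=
  fun v j => if (j : ℕ) = 0 then -(v (Fin.last n))
    else if (j : ℕ) = n then -(v ⟨n - 1, Nat.lt_succ_of_le (Nat.sub_le _ _)⟩)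
    else v ⟨(j : ℕ) - 1, Nat.lt_of_le_of_lt (Nat.sub_le _ _) j.isLt⟩

/-!
Every `f ∈ Wgrp n` has the form `f v i = ε i * v (σ⁻¹ i)`. The condition `f⁻¹ αₖ > 0` for the
simple root `αₖ = e_k - e_{k+1}` says that either `σ⁻¹ k < σ⁻¹ (k+1)` and `ε k = 1`, or
`σ⁻¹ (k+1) < σ⁻¹ k` and `ε (k+1) = -1`. The root `αₙ = e_{n-1} + e_n` excludes the second
alternative for `k = n-1`, and since the first one gives `ε k = 1`, it is then excluded all the way
down to `k = 1`. So `σ⁻¹` is increasing on `1, …, n`, i.e. `σ` is the cycle `(0 1 … m)` with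
`m = σ⁻¹ 0`, and `ε = 1` on `1, …, n-1`; as the number of sign changes is even, `ε 0 = ε n = s`.
Counting inversions gives `ℓ = m` for `s = 1` and `ℓ = 2n - m` for `s = -1`, so length `n` forces
`m = n`, and the two choices of `s` are `w⁺` and `w⁻`.
-/

open Equiv

namespace TypeD

section SignedPerm

variable {ι R : Type*}

def signedPerm [Mul R] (σ : Perm ι) (ε : ι → R) (v : ι → R) : ι → R :=
  fun i => ε i * v (σ⁻¹ i)

variable [Semiring R] (σ : Perm ι) (ε : ι → R)

lemma signedPerm_add (v w : ι → R) :
    signedPerm σ ε (v + w) = signedPerm σ ε v + signedPerm σ ε w := by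
  funext i
  simp only [signedPerm, Pi.add_apply, mul_add]

lemma signedPerm_single [DecidableEq ι] (a : ι) (c : R) :
    signedPerm σ ε (Pi.single a c) = Pi.single (σ a) (ε (σ a) * c) := by
  funext i
  rcases eq_or_ne i (σ a) with rfl | h
  · simp [signedPerm]
  · simp [signedPerm, Equiv.symm_apply_eq, h]

lemma signedPerm_inv_signedPerm (hε : ∀ i, ε i * ε i = 1) (v : ι → R) :
    signedPerm σ⁻¹ (ε ∘ σ) (signedPerm σ ε v) = v := by
  funext i
  simp [signedPerm, ← mul_assoc, hε]

lemma signedPerm_signedPerm_inv (hε : ∀ i, ε i * ε i = 1) (v : ι → R) :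
    signedPerm σ ε (signedPerm σ⁻¹ (ε ∘ σ) v) = v := by
  funext i
  simp [signedPerm, ← mul_assoc, hε]

lemma exists_mem_signedPerm_eq_iff (hε : ∀ i, ε i * ε i = 1) (S : Set (ι → R)) (α : ι → R) :
    (∃ β ∈ S, signedPerm σ ε β = α) ↔ signedPerm σ⁻¹ (ε ∘ σ) α ∈ S := by
  constructor
  · rintro ⟨β, hβ, rfl⟩
    rwa [signedPerm_inv_signedPerm σ ε hε]
  · exact fun h => ⟨_, h, signedPerm_signedPerm_inv σ ε hε α⟩

end SignedPerm

end TypeD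

namespace Fin

variable {n : ℕ}

lemma cycleRange_eq_zero_iff {m a : Fin (n+1)} : cycleRange m a = 0 ↔ a = m := by
  rw [← cycleRange_self m, (cycleRange m).injective.eq_iff]

lemma cycleRange_lt_cycleRange_iff {m a b : Fin (n+1)} (hab : a < b) :
    cycleRange m b < cycleRange m a ↔ b = m := by
  rcases le_or_gt b m with hbm | hbm
  · rw [lt_def, coe_cycleRange_of_le hbm, coe_cycleRange_of_le (hab.le.trans hbm),
      if_neg (hab.trans_le hbm).ne]
    split_ifs with h <;> simp only [Fin.ext_iff, lt_def] at * <;> omega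
  · rw [cycleRange_of_gt hbm]
    rcases le_or_gt a m with ham | ham
    · rw [lt_def, coe_cycleRange_of_le ham]
      split_ifs with h <;> simp only [Fin.ext_iff, lt_def] at * <;> omega
    · rw [cycleRange_of_gt ham]
      simp [hab.not_gt, hbm.ne']

lemma cycleRange_inv_castSucc_lt_succ (m : Fin (n+1)) (j : Fin n) (hj : j.castSucc ≠ 0) :
    (cycleRange m)⁻¹ j.castSucc < (cycleRange m)⁻¹ j.succ := by
  rcases n with _ | n
  · exact j.elim0
  obtain ⟨i, rfl⟩ := exists_succ_eq.2 (by simpa using hj)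
  rw [← succ_castSucc, Perm.inv_def, cycleRange_symm_succ, cycleRange_symm_succ]
  exact strictMono_succAbove _ castSucc_lt_succ

lemma strictMono_succ_of_castSucc_lt_succ {α : Type*} [Preorder α] {τ : Fin (n+1) → α}
    (h : ∀ j : Fin n, j.castSucc ≠ 0 → τ j.castSucc < τ j.succ) :
    StrictMono fun j : Fin n => τ j.succ := by
  rcases n with _ | n
  · exact fun j => j.elim0
  refine strictMono_iff_lt_succ.2 fun i => ?_
  have := h i.succ (by rw [← succ_castSucc]; exact succ_ne_zero _)
  rwa [← succ_castSucc] at this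

lemma eq_cycleRange_of_strictMono {σ : Perm (Fin (n+1))}
    (hσ : StrictMono fun j : Fin n => σ⁻¹ j.succ) : σ = cycleRange (σ⁻¹ 0) := by
  have hrange : Set.range (fun j : Fin n => σ⁻¹ j.succ) = Set.range (σ⁻¹ 0).succAbove := by
    rw [range_succAbove]
    ext x
    refine ⟨fun ⟨j, hj⟩ h => succ_ne_zero j (σ⁻¹.injective (hj.trans h)), fun hx => ?_⟩
    obtain ⟨j, hj⟩ := exists_succ_eq.2 fun h : σ x = 0 => hx (by rw [← h]; simp)
    exact ⟨j, by simp [hj]⟩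
  have hsucc := (hσ.range_inj (strictMono_succAbove _)).1 hrange
  rw [← inv_inj]
  ext x : 1
  cases x using Fin.cases with
  | zero => simp
  | succ j => simpa using congrFun hsucc j

end Fin

namespace TypeD

variable {n : ℕ}

lemma mul_eq_one_or_eq_neg_one {x y : ℚ} (hx : x = 1 ∨ x = -1) (hy : y = 1 ∨ y = -1) :
    x * y = 1 ∨ x * y = -1 := by
  rcases hx with rfl | rfl <;> rcases hy with rfl | rfl <;> norm_num

lemma mem_posRoots_iff {α : Fin (n+1) → ℚ} : α ∈ posRoots n ↔
    ∃ a b : Fin (n+1), a < b ∧ ∃ d : ℚ, (d = 1 ∨ d = -1) ∧ α = Pi.single a 1 + Pi.single b d := by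
  simp only [posRoots, Finset.mem_union, Finset.mem_image, Finset.mem_filter, Finset.mem_univ,
    true_and, Prod.exists, sub_eq_add_neg, ← Pi.single_neg]
  constructor
  · rintro (⟨a, b, hab, rfl⟩ | ⟨a, b, hab, rfl⟩)
    · exact ⟨a, b, hab, -1, Or.inr rfl, rfl⟩
    · exact ⟨a, b, hab, 1, Or.inl rfl, rfl⟩
  · rintro ⟨a, b, hab, d, rfl | rfl, rfl⟩
    · exact Or.inr ⟨a, b, hab, rfl⟩
    · exact Or.inl ⟨a, b, hab, rfl⟩

lemma single_add_single_mem_posRoots_iff {a b : Fin (n+1)} {c d : ℚ} (hab : a ≠ b)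
    (hc : c = 1 ∨ c = -1) (hd : d = 1 ∨ d = -1) :
    Pi.single a c + Pi.single b d ∈ posRoots n ↔ a < b ∧ c = 1 ∨ b < a ∧ d = 1 := by
  rw [mem_posRoots_iff]
  constructor
  · rintro ⟨i, j, hij, e, he, h⟩
    have hi := congrFun h i
    have hj := congrFun h j
    simp only [Pi.add_apply, Pi.single_apply, hij.ne, hij.ne', if_true, if_false] at hi hj
    grind
  · rintro (⟨hlt, rfl⟩ | ⟨hlt, rfl⟩)
    · exact ⟨a, b, hlt, d, hd, rfl⟩
    · exact ⟨b, a, hlt, c, hc, add_comm _ _⟩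

lemma single_add_single_injOn {d : ℚ} (hd : d = 1 ∨ d = -1) :
    Set.InjOn (fun p : Fin (n+1) × Fin (n+1) => (Pi.single p.1 1 + Pi.single p.2 d : Fin (n+1) → ℚ))
      {p | p.1 < p.2} := by
  rintro ⟨a, b⟩ (hab : a < b) ⟨a', b'⟩ (hab' : a' < b') h
  have hd0 : d ≠ 0 := by rcases hd with rfl | rfl <;> norm_num
  rcases (Pi.single_add_single_eq_single_add_single one_ne_zero hd0).1 h with
    ⟨rfl, rfl⟩ | ⟨-, rfl, rfl⟩ | ⟨-, hab_eq, -⟩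
  · rfl
  · exact absurd (hab.trans hab') (lt_irrefl _)
  · exact absurd hab_eq hab.ne

lemma single_add_single_neg_ne {a b a' b' : Fin (n+1)} (hab : a ≠ b) :
    (Pi.single a 1 + Pi.single b (-1) : Fin (n+1) → ℚ) ≠ Pi.single a' 1 + Pi.single b' 1 := by
  intro h
  have hb := congrFun h b
  simp only [Pi.add_apply, Pi.single_apply, if_neg hab.symm, if_true] at hb
  split_ifs at hb <;> norm_num at hb

lemma card_filter_posRoots (P : (Fin (n+1) → ℚ) → Prop) [DecidablePred P] :
    #{α ∈ posRoots n | P α} =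
      #{p : Fin (n+1) × Fin (n+1) | p.1 < p.2 ∧ P (Pi.single p.1 1 + Pi.single p.2 (-1))} +
      #{p : Fin (n+1) × Fin (n+1) | p.1 < p.2 ∧ P (Pi.single p.1 1 + Pi.single p.2 1)} := by
  have hpos : posRoots n =
      ({p : Fin (n+1) × Fin (n+1) | p.1 < p.2} : Finset _).image
        (fun p => (Pi.single p.1 1 + Pi.single p.2 (-1) : Fin (n+1) → ℚ)) ∪
      ({p : Fin (n+1) × Fin (n+1) | p.1 < p.2} : Finset _).image
        (fun p => (Pi.single p.1 1 + Pi.single p.2 1 : Fin (n+1) → ℚ)) := by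
    simp only [posRoots, sub_eq_add_neg, Pi.single_neg]
  have hdisj : Disjoint
      (({p : Fin (n+1) × Fin (n+1) | p.1 < p.2} : Finset _).image
        (fun p => (Pi.single p.1 1 + Pi.single p.2 (-1) : Fin (n+1) → ℚ)))
      (({p : Fin (n+1) × Fin (n+1) | p.1 < p.2} : Finset _).image
        (fun p => (Pi.single p.1 1 + Pi.single p.2 1 : Fin (n+1) → ℚ))) := by
    simp only [Finset.disjoint_left, Finset.mem_image, Finset.mem_filter, Finset.mem_univ,
      true_and]
    rintro _ ⟨p, hp, rfl⟩ ⟨q, -, hq⟩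
    exact single_add_single_neg_ne hp.ne hq.symm
  rw [hpos, Finset.filter_union,
    Finset.card_union_of_disjoint (Finset.disjoint_filter_filter hdisj),
    Finset.filter_image, Finset.filter_image,
    Finset.card_image_of_injOn ((single_add_single_injOn (Or.inr rfl)).mono
      fun _ hp => by simp_all),
    Finset.card_image_of_injOn ((single_add_single_injOn (Or.inl rfl)).mono
      fun _ hp => by simp_all),
    Finset.filter_filter, Finset.filter_filter]

lemma card_filter_lt_and_snd_eq {P : Fin (n+1) × Fin (n+1) → Prop} [DecidablePred P]
    (t : Fin (n+1)) (hP : ∀ p : Fin (n+1) × Fin (n+1), p.1 < p.2 → (P p ↔ p.2 = t)) :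
    #{p | p.1 < p.2 ∧ P p} = t := by
  have : ({p | p.1 < p.2 ∧ P p} : Finset _) = (Finset.Iio t).image (fun a => (a, t)) := by
    ext ⟨a, b⟩
    have := hP (a, b)
    simp only [Finset.mem_filter, Finset.mem_univ, true_and, Finset.mem_image, Finset.mem_Iio,
      Prod.mk.injEq] at this ⊢
    grind
  rw [this, Finset.card_image_of_injective _ (fun _ _ h => (Prod.mk.inj h).1), Fin.card_Iio]

lemma card_filter_lt_and_fst_eq {P : Fin (n+1) × Fin (n+1) → Prop} [DecidablePred P]
    (t : Fin (n+1)) (hP : ∀ p : Fin (n+1) × Fin (n+1), p.1 < p.2 → (P p ↔ p.1 = t)) :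
    #{p | p.1 < p.2 ∧ P p} = n - t := by
  have : ({p | p.1 < p.2 ∧ P p} : Finset _) = (Finset.Ioi t).image (fun b => (t, b)) := by
    ext ⟨a, b⟩
    have := hP (a, b)
    simp only [Finset.mem_filter, Finset.mem_univ, true_and, Finset.mem_image, Finset.mem_Ioi,
      Prod.mk.injEq] at this ⊢
    grind
  rw [this, Finset.card_image_of_injective _ (fun _ _ h => (Prod.mk.inj h).2), Fin.card_Ioi,
    Nat.add_sub_cancel]

lemma card_filter_lt_and_fst_eq_or_snd_eq {P : Fin (n+1) × Fin (n+1) → Prop} [DecidablePred P]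
    (t : Fin (n+1)) (hP : ∀ p : Fin (n+1) × Fin (n+1), p.1 < p.2 → (P p ↔ p.1 = t ∨ p.2 = t)) :
    #{p | p.1 < p.2 ∧ P p} = n := by
  rw [Finset.filter_congr (q := fun p => (p.1 < p.2 ∧ p.1 = t) ∨ (p.1 < p.2 ∧ p.2 = t))
      (fun p _ => by grind), Finset.filter_or, Finset.card_union_of_disjoint,
    card_filter_lt_and_fst_eq t (fun _ _ => Iff.rfl),
    card_filter_lt_and_snd_eq t (fun _ _ => Iff.rfl)]
  · have := t.is_le
    omega
  · refine Finset.disjoint_filter.2 fun p _ h h' => ?_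
    exact absurd (h.2 ▸ h'.2 ▸ h.1) (lt_irrefl _)

lemma neg_signedPerm_mem_posRoots_iff {σ : Perm (Fin (n+1))} {ε : Fin (n+1) → ℚ}
    (hε : ∀ i, ε i = 1 ∨ ε i = -1) {a b : Fin (n+1)} (hab : a ≠ b) {d : ℚ}
    (hd : d = 1 ∨ d = -1) :
    -signedPerm σ ε (Pi.single a 1 + Pi.single b d) ∈ posRoots n ↔
      σ a < σ b ∧ ε (σ a) = -1 ∨ σ b < σ a ∧ ε (σ b) * d = -1 := by
  have hsign : ∀ x y : ℚ, x = 1 ∨ x = -1 → y = 1 ∨ y = -1 → -(x * y) = 1 ∨ -(x * y) = -1 := by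
    rintro x y (rfl | rfl) (rfl | rfl) <;> norm_num
  rw [signedPerm_add, signedPerm_single, signedPerm_single, neg_add, ← Pi.single_neg,
    ← Pi.single_neg, single_add_single_mem_posRoots_iff (σ.injective.ne hab)
      (hsign _ _ (hε (σ a)) (Or.inl rfl)) (hsign _ _ (hε (σ b)) hd),
    mul_one, neg_eq_iff_eq_neg, neg_eq_iff_eq_neg]

lemma exists_posRoot_signedPerm_eq_iff {σ : Perm (Fin (n+1))} {ε : Fin (n+1) → ℚ}
    (hε : ∀ i, ε i = 1 ∨ ε i = -1) {a b : Fin (n+1)} (hab : a ≠ b) {c d : ℚ}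
    (hc : c = 1 ∨ c = -1) (hd : d = 1 ∨ d = -1) :
    (∃ β ∈ posRoots n, signedPerm σ ε β = Pi.single a c + Pi.single b d) ↔
      σ⁻¹ a < σ⁻¹ b ∧ ε a * c = 1 ∨ σ⁻¹ b < σ⁻¹ a ∧ ε b * d = 1 := by
  have hε' : ∀ i, ε i * ε i = 1 := fun i => by rcases hε i with h | h <;> rw [h] <;> norm_num
  refine (exists_mem_signedPerm_eq_iff σ ε hε' (posRoots n : Set (Fin (n+1) → ℚ)) _).trans ?_
  have hσ : ∀ x, σ (σ⁻¹ x) = x := σ.apply_symm_apply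
  rw [signedPerm_add, signedPerm_single, signedPerm_single, Function.comp_apply,
    Function.comp_apply, hσ, hσ, Finset.mem_coe]
  exact single_add_single_mem_posRoots_iff (σ⁻¹.injective.ne hab)
    (mul_eq_one_or_eq_neg_one (hε a) hc) (mul_eq_one_or_eq_neg_one (hε b) hd)

lemma sroot_val (j : Fin n) : sroot n j = Pi.single j.castSucc 1 + Pi.single j.succ (-1) := by
  funext i
  simp only [sroot, j.isLt, if_true, Pi.add_apply, Pi.single_apply, Fin.ext_iff,
    Fin.val_castSucc, Fin.val_succ]
  split_ifs <;> first | omega | norm_num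

lemma sroot_self (j : Fin n) (hj : (j : ℕ) + 1 = n) :
    sroot n n = Pi.single j.castSucc 1 + Pi.single j.succ 1 := by
  funext i
  simp only [sroot, lt_irrefl, if_false, Pi.add_apply, Pi.single_apply, Fin.ext_iff,
    Fin.val_castSucc, Fin.val_succ]
  split_ifs <;> first | omega | norm_num

lemma forall_sroot_iff (P : (Fin (n+1) → ℚ) → Prop) (hn : 1 ≤ n) :
    (∀ k, 1 ≤ k → k ≤ n → P (sroot n k)) ↔
      (∀ j : Fin n, j.castSucc ≠ 0 → P (Pi.single j.castSucc 1 + Pi.single j.succ (-1))) ∧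
      ∀ j : Fin n, (j : ℕ) + 1 = n → P (Pi.single j.castSucc 1 + Pi.single j.succ 1) := by
  constructor
  · refine fun h => ⟨fun j hj => ?_, fun j hj => ?_⟩
    · rw [← sroot_val]
      exact h j (Nat.one_le_iff_ne_zero.2 (by simpa [Fin.ext_iff] using hj)) j.isLt.le
    · rw [← sroot_self j hj]
      exact h n hn le_rfl
  · rintro ⟨hlt, hlast⟩ k hk1 hk2
    rcases hk2.lt_or_eq with hk | rfl
    · have := hlt ⟨k, hk⟩ (by simp only [ne_eq, Fin.ext_iff, Fin.val_castSucc, Fin.val_zero]; omega)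
      rwa [← sroot_val] at this
    · have := hlast ⟨k - 1, by omega⟩ (by dsimp only; omega)
      rwa [← sroot_self _ (by dsimp only; omega)] at this

lemma forall_sroot_signedPerm_iff {σ : Perm (Fin (n+1))} {ε : Fin (n+1) → ℚ}
    (hε : ∀ i, ε i = 1 ∨ ε i = -1) (hn : 1 ≤ n) :
    (∀ k, 1 ≤ k → k ≤ n → ∃ β ∈ posRoots n, signedPerm σ ε β = sroot n k) ↔
      (∀ j : Fin n, j.castSucc ≠ 0 → σ⁻¹ j.castSucc < σ⁻¹ j.succ ∧ ε j.castSucc = 1 ∨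
        σ⁻¹ j.succ < σ⁻¹ j.castSucc ∧ ε j.succ = -1) ∧
      ∀ j : Fin n, (j : ℕ) + 1 = n → σ⁻¹ j.castSucc < σ⁻¹ j.succ ∧ ε j.castSucc = 1 ∨
        σ⁻¹ j.succ < σ⁻¹ j.castSucc ∧ ε j.succ = 1 := by
  rw [forall_sroot_iff (fun α => ∃ β ∈ posRoots n, signedPerm σ ε β = α) hn]
  refine and_congr (forall_congr' fun j => imp_congr_right fun _ => ?_)
    (forall_congr' fun j => imp_congr_right fun _ => ?_)
  · rw [exists_posRoot_signedPerm_eq_iff hε (Fin.castSucc_lt_succ (i := j)).ne (Or.inl rfl)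
      (Or.inr rfl), mul_one, mul_neg_one, neg_eq_iff_eq_neg]
  · rw [exists_posRoot_signedPerm_eq_iff hε (Fin.castSucc_lt_succ (i := j)).ne (Or.inl rfl)
      (Or.inl rfl), mul_one, mul_one]

lemma ascending_of_simple_root_conditions {α : Type*} [Preorder α] {τ : Fin (n+1) → α}
    {ε : Fin (n+1) → ℚ}
    (hadj : ∀ j : Fin n, j.castSucc ≠ 0 → τ j.castSucc < τ j.succ ∧ ε j.castSucc = 1 ∨
      τ j.succ < τ j.castSucc ∧ ε j.succ = -1)
    (hlast : ∀ j : Fin n, (j : ℕ) + 1 = n → τ j.castSucc < τ j.succ ∧ ε j.castSucc = 1 ∨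
      τ j.succ < τ j.castSucc ∧ ε j.succ = 1) :
    ∀ j : Fin n, j.castSucc ≠ 0 → τ j.castSucc < τ j.succ ∧ ε j.castSucc = 1 := by
  rcases n with _ | n
  · exact fun j => j.elim0
  intro j
  induction j using Fin.reverseInduction with
  | last =>
    intro h0
    refine (hadj _ h0).resolve_right fun ⟨hlt, hε⟩ => ?_
    rcases hlast (Fin.last n) rfl with ⟨hlt', -⟩ | ⟨-, hε'⟩
    · exact lt_asymm hlt hlt'
    · rw [Fin.succ_last] at hε
      norm_num [hε] at hε'
  | cast i ih =>
    intro h0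
    refine (hadj _ h0).resolve_right fun h => ?_
    have hε := h.2
    rw [Fin.succ_castSucc, (ih (by rw [← Fin.succ_castSucc]; exact Fin.succ_ne_zero _)).2] at hε
    norm_num at hε

def signVec (n : ℕ) (s : ℚ) : Fin (n+1) → ℚ :=
  fun i => if i = 0 ∨ i = Fin.last n then s else 1

def kostantRep (n : ℕ) (m : Fin (n+1)) (s : ℚ) : (Fin (n+1) → ℚ) → Fin (n+1) → ℚ :=
  signedPerm (Fin.cycleRange m) (signVec n s)

lemma signVec_sign {s : ℚ} (hs : s = 1 ∨ s = -1) (i : Fin (n+1)) :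
    signVec n s i = 1 ∨ signVec n s i = -1 := by
  unfold signVec
  split_ifs <;> simp [hs]

lemma prod_signVec (hn : 1 ≤ n) {s : ℚ} (hs : s = 1 ∨ s = -1) : ∏ i, signVec n s i = 1 := by
  rw [Finset.prod_eq_mul_of_mem 0 (Fin.last n) (Finset.mem_univ _) (Finset.mem_univ _)
    (by rw [Ne, Fin.zero_eq_last_iff]; omega) fun i _ h => by simp [signVec, h.1, h.2]]
  simp only [signVec, true_or, or_true, if_true]
  rcases hs with rfl | rfl <;> norm_num

lemma eq_signVec {ε : Fin (n+1) → ℚ} (hn : 1 ≤ n) (hε : ∀ i, ε i = 1 ∨ ε i = -1)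
    (hprod : ∏ i, ε i = 1) (hmid : ∀ j : Fin n, j.castSucc ≠ 0 → ε j.castSucc = 1) :
    ε = signVec n (ε 0) := by
  have hmid' : ∀ i, i ≠ 0 → i ≠ Fin.last n → ε i = 1 := fun i h0 hl => by
    simpa using hmid (i.castPred hl) (by simpa using h0)
  have hlast : ε (Fin.last n) = ε 0 := by
    rw [Finset.prod_eq_mul_of_mem 0 (Fin.last n) (Finset.mem_univ _) (Finset.mem_univ _)
      (by rw [Ne, Fin.zero_eq_last_iff]; omega) fun i _ h => hmid' i h.1 h.2] at hprod
    rcases hε 0 with h | h <;> rcases hε (Fin.last n) with h' | h' <;>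
      simp only [h, h'] at hprod ⊢ <;> norm_num at hprod
  funext i
  unfold signVec
  split_ifs with h
  · rcases h with rfl | rfl
    · rfl
    · exact hlast
  · rw [not_or] at h
    exact hmid' i h.1 h.2

lemma lenOf_kostantRep_one (m : Fin (n+1)) : lenOf n (kostantRep n m 1) = m := by
  have hε : ∀ i, signVec n 1 i = 1 := fun i => ite_self 1
  rw [lenOf, card_filter_posRoots, card_filter_lt_and_snd_eq m, Finset.card_eq_zero.2, add_zero]
  · refine Finset.filter_false_of_mem fun p _ ⟨hp, hneg⟩ => ?_
    rw [kostantRep, neg_signedPerm_mem_posRoots_iff (signVec_sign (Or.inl rfl)) hp.ne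
      (Or.inl rfl), hε, hε] at hneg
    norm_num at hneg
  · intro p hp
    rw [kostantRep, neg_signedPerm_mem_posRoots_iff (signVec_sign (Or.inl rfl)) hp.ne
      (Or.inr rfl), hε, hε, Fin.cycleRange_lt_cycleRange_iff hp]
    norm_num

lemma lenOf_kostantRep_neg_one (m : Fin (n+1)) :
    lenOf n (kostantRep n m (-1)) = 2 * n - m := by
  have key : ∀ p : Fin (n+1) × Fin (n+1), p.1 < p.2 → ∀ d : ℚ, d = 1 ∨ d = -1 →
      (-kostantRep n m (-1) (Pi.single p.1 1 + Pi.single p.2 d) ∈ posRoots n ↔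
        p.1 = m ∨ p.2 = m ∧ d = 1) := by
    intro p hp d hd
    have hlt := Fin.cycleRange_lt_cycleRange_iff (m := m) hp
    have h₁ := Fin.cycleRange_eq_zero_iff (m := m) (a := p.1)
    have h₂ := Fin.cycleRange_eq_zero_iff (m := m) (a := p.2)
    have := Fin.le_last (Fin.cycleRange m p.1)
    have := Fin.le_last (Fin.cycleRange m p.2)
    rw [kostantRep, neg_signedPerm_mem_posRoots_iff (signVec_sign (Or.inr rfl)) hp.ne hd]
    simp only [signVec]
    rcases hd with rfl | rfl <;> split_ifs <;> grind
  rw [lenOf, card_filter_posRoots, card_filter_lt_and_fst_eq m,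
    card_filter_lt_and_fst_eq_or_snd_eq m]
  · have := m.is_le
    omega
  · intro p hp
    rw [key p hp 1 (Or.inl rfl)]
    simp
  · intro p hp
    rw [key p hp (-1) (Or.inr rfl)]
    norm_num

lemma kostantRep_last_one : kostantRep n (Fin.last n) 1 = wplusFun n := by
  funext v j
  cases j using Fin.cases with
  | zero => simp [kostantRep, signedPerm, signVec, wplusFun, Perm.inv_def, -Fin.cycleRange_last]
  | succ j =>
    simp only [kostantRep, signedPerm, signVec, Fin.succ_ne_zero, false_or, ite_self, Perm.inv_def,
      Fin.cycleRange_symm_succ, Fin.succAbove_last, one_mul, wplusFun, Fin.val_succ,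
      Nat.add_eq_zero_iff, one_ne_zero, and_false, ↓reduceIte, add_tsub_cancel_right]
    rfl

lemma kostantRep_last_neg_one : kostantRep n (Fin.last n) (-1) = wminusFun n := by
  funext v j
  cases j using Fin.cases with
  | zero => simp [kostantRep, signedPerm, signVec, wminusFun, Perm.inv_def, -Fin.cycleRange_last]
  | succ j =>
    simp only [kostantRep, signedPerm, signVec, Fin.succ_ne_zero, false_or, Perm.inv_def,
      Fin.cycleRange_symm_succ, Fin.succAbove_last, ite_mul, neg_mul, one_mul, wminusFun,
      Fin.val_succ, Nat.add_eq_zero_iff, one_ne_zero, and_false, ↓reduceIte, add_tsub_cancel_right]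
    split_ifs with h₁ h₂ h₂ <;> simp only [Fin.ext_iff, Fin.val_succ, Fin.val_last] at h₁
    · congr 2
      ext
      simp only [Fin.val_castSucc]
      omega
    · omega
    · omega
    · rfl

lemma kostantRep_mem_WPset (hn : 2 ≤ n) (m : Fin (n+1)) {s : ℚ} (hs : s = 1 ∨ s = -1) :
    kostantRep n m s ∈ WPset n := by
  refine ⟨⟨Fin.cycleRange m, signVec n s, signVec_sign hs, prod_signVec (by omega) hs,
    fun v i => rfl⟩, ?_⟩
  have hasc : ∀ j : Fin n, j.castSucc ≠ 0 → (Fin.cycleRange m)⁻¹ j.castSucc <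
      (Fin.cycleRange m)⁻¹ j.succ ∧ signVec n s j.castSucc = 1 := fun j hj =>
    ⟨Fin.cycleRange_inv_castSucc_lt_succ m j hj,
      if_neg (by simp [hj, (Fin.castSucc_lt_last j).ne])⟩
  rw [kostantRep, forall_sroot_signedPerm_iff (signVec_sign hs) (by omega)]
  exact ⟨fun j hj => Or.inl (hasc j hj), fun j hj => Or.inl (hasc j (by
    simp only [ne_eq, Fin.ext_iff, Fin.val_castSucc, Fin.val_zero]; omega))⟩

lemma exists_eq_kostantRep (hn : 2 ≤ n) {f : (Fin (n+1) → ℚ) → Fin (n+1) → ℚ}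
    (hf : f ∈ WPset n) : ∃ m s, (s = 1 ∨ s = -1) ∧ f = kostantRep n m s := by
  obtain ⟨⟨σ, ε, hε, hprod, hfε⟩, hwp⟩ := hf
  obtain rfl : f = signedPerm σ ε := funext fun v => funext (hfε v)
  obtain ⟨hadj, hlast⟩ := (forall_sroot_signedPerm_iff hε (by omega)).1 hwp
  have hasc := ascending_of_simple_root_conditions hadj hlast
  refine ⟨σ⁻¹ 0, ε 0, hε 0, ?_⟩
  rw [kostantRep, ← Fin.eq_cycleRange_of_strictMono
      (Fin.strictMono_succ_of_castSucc_lt_succ fun j hj => (hasc j hj).1),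
    ← eq_signVec (by omega) hε hprod fun j hj => (hasc j hj).2]

end TypeD

open TypeD

theorem stmt8 (n : ℕ) (hn : 2 ≤ n) :
    {f | f ∈ WPset n ∧ lenOf n f = n} =
      ({wplusFun n, wminusFun n} :
        Set ((Fin (n+1) → ℚ) → (Fin (n+1) → ℚ))) := by
  ext f
  simp only [Set.mem_ofPred_eq, Set.mem_insert_iff, Set.mem_singleton_iff]
  constructor
  · rintro ⟨hf, hlen⟩
    obtain ⟨m, s, rfl | rfl, rfl⟩ := exists_eq_kostantRep hn hf
    · rw [lenOf_kostantRep_one] at hlen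
      left
      rw [← kostantRep_last_one, show m = Fin.last n from Fin.ext hlen]
    · rw [lenOf_kostantRep_neg_one] at hlen
      right
      rw [← kostantRep_last_neg_one, show m = Fin.last n from Fin.ext (by rw [Fin.val_last]; omega)]
  · rintro (rfl | rfl)
    · rw [← kostantRep_last_one]
      exact ⟨kostantRep_mem_WPset hn _ (Or.inl rfl), by rw [lenOf_kostantRep_one, Fin.val_last]⟩
    · rw [← kostantRep_last_neg_one]
      exact ⟨kostantRep_mem_WPset hn _ (Or.inr rfl), by
        rw [lenOf_kostantRep_neg_one, Fin.val_last]; omega⟩
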